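/- arXiv:2112.06604 — 2 statements merged into one kernel-verified Lean document; each statement's English description precedes it below -/
import Mathlib

section
/- Let C be a field, let W, D, F ∈ C⟦u⟧ be formal power series, let e ≥ 1 and ℓ ≥ 0 be integers, and let r ≥ 0 be an integer. Assume the constant coefficient of W is nonzero, that D has order exactly e, and that F has order exactly ℓ. Let M ⊆ C⟦u⟧ be the C-linear span of the family (W^{r−j}·D^{j}·F) for j = 0, …, r. For each integer i ≥ 0 define the linear functional a_i^* : M → C sending f to the coefficient of u^{i·e+ℓ} in f. Then the functionals a_0^*, a_1^*, …, a_r^* form a basis of the dual space M^* of the (r+1)-dimensional space M. -/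
/-!
Writing `g j = W ^ (r - j) * D ^ j * F`, the orders add up to `ord (g j) = j * e + ℓ`, so the
pairing matrix `(a_i^*(g j))_{i,j}` is lower triangular with nonzero diagonal. Its columns being
independent, the `g j` form a basis of `M`; its rows being independent, so do the `a_i^*` in the
dual, which has the same dimension `r + 1`.
-/

open PowerSeries Submodule

theorem Matrix.isUnit_of_isLowerTriangular {m K : Type*} [Fintype m] [LinearOrder m] [Field K]
    {A : Matrix m m K} (hA : A.IsLowerTriangular) (hd : ∀ i, A i i ≠ 0) : IsUnit A := by
  rw [Matrix.isUnit_iff_isUnit_det, Matrix.det_of_isLowerTriangular A hA]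
  exact (Finset.prod_ne_zero_iff.mpr fun i _ => hd i).isUnit

section Pairing

variable {ι K V : Type*} [Fintype ι] [DecidableEq ι] [Field K] [AddCommGroup V] [Module K V]
  {g : ι → V} {φ : ι → V →ₗ[K] K}

theorem linearIndependent_of_isUnit_pairing (h : IsUnit (Matrix.of fun i j => φ i (g j))) :
    LinearIndependent K g := by
  refine LinearIndependent.of_comp (LinearMap.pi φ) ?_
  exact Matrix.linearIndependent_cols_iff_isUnit.mpr h

theorem linearIndependent_restrict_span_of_isUnit_pairing
    (h : IsUnit (Matrix.of fun i j => φ i (g j))) :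
    LinearIndependent K fun i => (φ i).comp (span K (Set.range g)).subtype := by
  let v : ι → span K (Set.range g) := fun j => ⟨g j, subset_span (Set.mem_range_self j)⟩
  refine LinearIndependent.of_comp (LinearMap.pi fun j => LinearMap.applyₗ (v j)) ?_
  exact Matrix.linearIndependent_rows_iff_isUnit.mpr h

theorem span_restrict_span_eq_top_of_isUnit_pairing
    (h : IsUnit (Matrix.of fun i j => φ i (g j))) :
    span K (Set.range fun i => (φ i).comp (span K (Set.range g)).subtype) = ⊤ := by
  let b := Module.Basis.span (linearIndependent_of_isUnit_pairing h)
  have : FiniteDimensional K (span K (Set.range g)) := Module.Finite.of_basis b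
  refine (linearIndependent_restrict_span_of_isUnit_pairing h).span_eq_top_of_card_eq_finrank' ?_
  rw [Subspace.dual_finrank_eq, Module.finrank_eq_card_basis b]

end Pairing

theorem PowerSeries.order_pow_mul_pow_mul {R : Type*} [Semiring R] [NoZeroDivisors R]
    [Nontrivial R] {W D F : R⟦X⟧} {e ℓ : ℕ} (hW : W.order = 0) (hD : D.order = e)
    (hF : F.order = ℓ) (a j : ℕ) : (W ^ a * D ^ j * F).order = (j * e + ℓ : ℕ) := by
  rw [order_mul, order_mul, order_pow, order_pow, hW, hD, hF]
  simp

/-- The coefficient functionals `a_i^*(f) = coeff (i*e+ℓ) f`, for `i = 0, …, r`, form a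
basis of the dual of the span `M` of the family `W^(r-j) * D^j * F`, `j = 0, …, r`. -/
theorem stmt2 (C : Type*) [Field C] (W D F : PowerSeries C) (e ℓ r : ℕ)
    (he : 1 ≤ e)
    (hW : PowerSeries.coeff (R := C) 0 W ≠ 0)
    (hD0 : ∀ n < e, PowerSeries.coeff (R := C) n D = 0)
    (hDe : PowerSeries.coeff (R := C) e D ≠ 0)
    (hF0 : ∀ n < ℓ, PowerSeries.coeff (R := C) n F = 0)
    (hFl : PowerSeries.coeff (R := C) ℓ F ≠ 0) :
    LinearIndependent C (fun i : Fin (r + 1) =>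
      (PowerSeries.coeff (R := C) ((i : ℕ) * e + ℓ)).comp
        (Submodule.span C
          (Set.range fun j : Fin (r + 1) => W ^ (r - (j : ℕ)) * D ^ (j : ℕ) * F)).subtype) ∧
    Submodule.span C (Set.range fun i : Fin (r + 1) =>
      (PowerSeries.coeff (R := C) ((i : ℕ) * e + ℓ)).comp
        (Submodule.span C
          (Set.range fun j : Fin (r + 1) => W ^ (r - (j : ℕ)) * D ^ (j : ℕ) * F)).subtype)
      = ⊤ := by
  have hord (j : Fin (r + 1)) :
      (W ^ (r - (j : ℕ)) * D ^ (j : ℕ) * F).order = (j * e + ℓ : ℕ) :=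
    order_pow_mul_pow_mul (order_eq_nat.mpr ⟨hW, by omega⟩) (order_eq_nat.mpr ⟨hDe, hD0⟩)
      (order_eq_nat.mpr ⟨hFl, hF0⟩) _ _
  have hpairing : IsUnit (Matrix.of fun (i j : Fin (r + 1)) =>
      coeff (R := C) ((i : ℕ) * e + ℓ) (W ^ (r - (j : ℕ)) * D ^ (j : ℕ) * F)) := by
    refine Matrix.isUnit_of_isLowerTriangular (fun i j hij => ?_) fun j =>
      (order_eq_nat.mp (hord j)).1
    refine (Matrix.of_apply _ i j).trans (coeff_of_lt_order _ ?_)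
    rw [hord, Nat.cast_lt]
    exact Nat.add_lt_add_right
      (Nat.mul_lt_mul_of_pos_right (OrderDual.toDual_lt_toDual.mp hij) he) ℓ
  exact ⟨linearIndependent_restrict_span_of_isUnit_pairing hpairing,
    span_restrict_span_eq_top_of_isUnit_pairing hpairing⟩
end

section
/- Let p be an odd prime, r ≥ 1 an integer, and q = p^r. Let R be a commutative ring of characteristic p. Let α, m, l be natural numbers with 1 ≤ m ≤ α ≤ r, p^α dividing l, and 0 ≤ l < q. Let f, E ∈ R⟦u⟧ be formal power series such that every nonzero coefficient of f occurs at an exponent of the form j(q−1)+l for some integer j ≥ 0, every nonzero coefficient of E occurs at an exponent of the form i(q−1)+1 for some integer i ≥ 0, and the coefficient of u in E equals 1. Then the coefficient of u^{p^m(q−1)+1} in the product f·E^{q−l} equals the coefficient of u^{(p^m−1)(q−1)+l} in f. -/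
/-!
Write `Q = q - 1`. The support conditions say `f = u^l F` and `E = u H` with `H` a power series
in `u^Q` and `H(0) = 1`. Since `p^m` divides both `q` and `l`, we have `q - l = p^m c` and
`E^(q-l) = u^(q-l) (H^(p^m))^c`; in characteristic `p` the series `H^(p^m)` is a power series in
`u^(p^m Q)`, hence so is `K = (H^(p^m))^c`, and `K(0) = 1`. Thus `f E^(q-l) = u^q F K`, and the
coefficient of `u^((p^m-1)Q)` in `F K` is that of `F`, because `(p^m - 1) Q < p^m Q` and `K` has
no terms of positive degree below `p^m Q`.
-/

open PowerSeries

namespace PowerSeries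

variable {R : Type*} [CommRing R]

theorem exists_eq_X_pow_mul_of_coeff_ne_zero {f : R⟦X⟧} {Q d : ℕ}
    (hf : ∀ n, coeff n f ≠ 0 → ∃ j, n = j * Q + d) :
    ∃ F : R⟦X⟧, f = X ^ d * F ∧ ∀ n, coeff n F ≠ 0 → Q ∣ n := by
  refine ⟨mk fun n => coeff (n + d) f, ?_, ?_⟩
  · ext n
    rw [coeff_X_pow_mul']
    split_ifs with hdn
    · rw [coeff_mk, Nat.sub_add_cancel hdn]
    · by_contra hn
      obtain ⟨j, rfl⟩ := hf n hn
      omega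
  · intro n hn
    obtain ⟨j, hj⟩ := hf (n + d) (by rwa [coeff_mk] at hn)
    exact ⟨j, by rw [Nat.add_right_cancel hj, mul_comm]⟩

theorem dvd_of_coeff_pow_ne_zero {K : R⟦X⟧} {N : ℕ} (hK : ∀ n, coeff n K ≠ 0 → N ∣ n) (c : ℕ) :
    ∀ n, coeff n (K ^ c) ≠ 0 → N ∣ n := by
  induction c with
  | zero =>
    intro n hn
    rw [pow_zero, coeff_one, ite_ne_right_iff] at hn
    exact hn.1 ▸ dvd_zero N
  | succ c ih =>
    intro n hn
    rw [pow_succ, coeff_mul] at hn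
    obtain ⟨⟨x, y⟩, hxy, hne⟩ := Finset.exists_ne_zero_of_sum_ne_zero hn
    rw [Finset.HasAntidiagonal.mem_antidiagonal] at hxy
    exact hxy ▸ dvd_add (ih x (left_ne_zero_of_mul hne)) (hK y (right_ne_zero_of_mul hne))

theorem map_iterateFrobenius_expand (p : ℕ) [ExpChar R p] (K : R⟦X⟧) (m : ℕ) :
    map (iterateFrobenius R p m) (expand (p ^ m) (pow_ne_zero m (expChar_ne_zero R p)) K) =
      K ^ p ^ m :=
  MvPowerSeries.map_iterateFrobenius_expand p (expChar_ne_zero R p) K m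

theorem mul_dvd_of_coeff_pow_expChar_pow_ne_zero (p : ℕ) [ExpChar R p] {K : R⟦X⟧} {N : ℕ}
    (hK : ∀ n, coeff n K ≠ 0 → N ∣ n) (m : ℕ) :
    ∀ n, coeff n (K ^ p ^ m) ≠ 0 → p ^ m * N ∣ n := by
  intro n hn
  rw [← map_iterateFrobenius_expand, coeff_map, coeff_expand] at hn
  split_ifs at hn with hdvd
  · obtain ⟨t, rfl⟩ := hdvd
    rw [Nat.mul_div_cancel_left _ (pow_pos (Nat.pos_of_ne_zero (expChar_ne_zero R p)) m)] at hn
    exact mul_dvd_mul_left _ (hK t fun h => hn (by rw [h, map_zero]))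
  · exact absurd (map_zero _) hn

theorem coeff_mul_eq_coeff_mul_constantCoeff {f K : R⟦X⟧} {N n : ℕ}
    (hK : ∀ i, coeff i K ≠ 0 → N ∣ i) (hn : n < N) :
    coeff n (f * K) = coeff n f * constantCoeff K := by
  rw [coeff_mul, Finset.sum_eq_single (n, 0), coeff_zero_eq_constantCoeff]
  · rintro ⟨x, y⟩ hxy hne
    rw [Finset.HasAntidiagonal.mem_antidiagonal] at hxy
    have hy : y ≠ 0 := by rintro rfl; exact hne (by rw [← hxy, add_zero])
    by_contra hxy'
    have := Nat.le_of_dvd (Nat.pos_of_ne_zero hy) (hK y (right_ne_zero_of_mul hxy'))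
    omega
  · exact fun h => absurd (Finset.HasAntidiagonal.mem_antidiagonal.mpr (add_zero n)) h

end PowerSeries

theorem stmt4_general (p r : ℕ) (hp : p.Prime) (hr : 1 ≤ r)
    (R : Type*) [CommRing R] [CharP R p]
    (α m l : ℕ) (hmα : m ≤ α) (hαr : α ≤ r)
    (hdvd : p ^ α ∣ l) (hl : l < p ^ r)
    (f E : PowerSeries R)
    (hf : ∀ n : ℕ, PowerSeries.coeff n f ≠ 0 → ∃ j : ℕ, n = j * (p ^ r - 1) + l)
    (hE : ∀ n : ℕ, PowerSeries.coeff n E ≠ 0 → ∃ i : ℕ, n = i * (p ^ r - 1) + 1)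
    (hE1 : PowerSeries.coeff 1 E = 1) :
    PowerSeries.coeff (p ^ m * (p ^ r - 1) + 1) (f * E ^ (p ^ r - l)) =
      PowerSeries.coeff ((p ^ m - 1) * (p ^ r - 1) + l) f := by
  have : ExpChar R p := ExpChar.prime hp
  obtain ⟨F, rfl, -⟩ := exists_eq_X_pow_mul_of_coeff_ne_zero hf
  obtain ⟨H, rfl, hH⟩ := exists_eq_X_pow_mul_of_coeff_ne_zero hE
  have hH0 : constantCoeff H = 1 := by
    rwa [pow_one, coeff_succ_X_mul, coeff_zero_eq_constantCoeff] at hE1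
  obtain ⟨c, hc⟩ : p ^ m ∣ p ^ r - l :=
    Nat.dvd_sub (pow_dvd_pow p (hmα.trans hαr)) ((pow_dvd_pow p hmα).trans hdvd)
  set Q := p ^ r - 1
  have hK : ∀ n, coeff n ((H ^ p ^ m) ^ c) ≠ 0 → p ^ m * Q ∣ n :=
    dvd_of_coeff_pow_ne_zero (mul_dvd_of_coeff_pow_expChar_pow_ne_zero p hH m) c
  have hQ : 0 < Q := Nat.sub_pos_of_lt (Nat.one_lt_pow (by omega) hp.one_lt)
  have hP : 1 ≤ p ^ m := Nat.one_le_pow _ _ hp.pos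
  have hPQ : (p ^ m - 1) * Q + Q = p ^ m * Q := by
    rw [← add_one_mul, Nat.sub_add_cancel hP]
  have hprod : X ^ l * F * (X ^ 1 * H) ^ (p ^ r - l) = X ^ p ^ r * (F * (H ^ p ^ m) ^ c) := by
    rw [mul_pow, ← pow_mul, one_mul, mul_mul_mul_comm, ← pow_add, Nat.add_sub_cancel' hl.le, hc,
      pow_mul]
  have hexp : p ^ m * Q + 1 = (p ^ m - 1) * Q + p ^ r := by omega
  rw [hprod, hexp, coeff_X_pow_mul, coeff_X_pow_mul, coeff_mul_eq_coeff_mul_constantCoeff hK,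
    map_pow, map_pow, hH0, one_pow, one_pow, mul_one]
  omega

/-- Coefficient computation behind Corollary 3.5: if `f` is supported on exponents
`j(q-1)+l`, `E` is supported on exponents `i(q-1)+1` with `coeff 1 E = 1`, `R` has
characteristic `p`, `q = p^r`, `1 ≤ m ≤ α ≤ r`, `p^α ∣ l`, and `l < q`, then the
coefficient of `u^(p^m(q-1)+1)` in `f * E^(q-l)` equals the coefficient of
`u^((p^m-1)(q-1)+l)` in `f`. -/
theorem stmt4 (p r : ℕ) (hp : p.Prime) (hodd : Odd p) (hr : 1 ≤ r)
    (R : Type*) [CommRing R] [CharP R p]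
    (α m l : ℕ) (hm : 1 ≤ m) (hmα : m ≤ α) (hαr : α ≤ r)
    (hdvd : p ^ α ∣ l) (hl : l < p ^ r)
    (f E : PowerSeries R)
    (hf : ∀ n : ℕ, PowerSeries.coeff n f ≠ 0 → ∃ j : ℕ, n = j * (p ^ r - 1) + l)
    (hE : ∀ n : ℕ, PowerSeries.coeff n E ≠ 0 → ∃ i : ℕ, n = i * (p ^ r - 1) + 1)
    (hE1 : PowerSeries.coeff 1 E = 1) :
    PowerSeries.coeff (p ^ m * (p ^ r - 1) + 1) (f * E ^ (p ^ r - l)) =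
      PowerSeries.coeff ((p ^ m - 1) * (p ^ r - 1) + l) f :=
  stmt4_general p r hp hr R α m l hmα hαr hdvd hl f E hf hE hE1
end
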